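/- (Partial second level integral.) Let γ₁ denote the standard Gaussian measure on ℝ, let C ≥ 0 and ν ≥ 0, and set a = √(2ν). Then ∫_ℝ exp( −C( g² + φ̄_ν(g) ) ) dγ₁(g) = (1/2)·e^{Cν} + e^{−Cν}·( 1 − Φ(a) ) + e^{Cν}·(1 + 2C)^{−1/2}·( Φ( a·√(1+2C) ) − 1/2 ). -/

import Mathlib

/-!
On `g ≤ 0`, `0 < g ≤ a` and `a < g` the exponent `g² + φ̄_ν(g)` equals `-ν`, `g² - ν` and `ν`.
The outer pieces contribute constants times Gaussian masses, with `Φ(0) = 1/2` by symmetry. On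
the middle piece the standard density times `e^{-Cg²}` is the standard density at `√(1+2C) g`,
so the substitution `y = √(1+2C) g` yields `(1+2C)^{-1/2} (Φ(a√(1+2C)) - Φ(0))`.
-/

open MeasureTheory ProbabilityTheory

/-- `sgn t = 1` if `t > 0` and `sgn t = −1` if `t ≤ 0`. -/
noncomputable def sgn (t : ℝ) : ℝ := if 0 < t then 1 else -1

/-- `φ̄_ν(u)`: the per-coordinate minimum of `z² − 2uz + ν·sgn(z)`. -/
noncomputable def phibar (ν u : ℝ) : ℝ :=
  if u ≤ 0 then -u ^ 2 - ν else if u ≤ Real.sqrt (2 * ν) then -ν else -u ^ 2 + ν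

open Real Set
open scoped NNReal

lemma sq_add_phibar_of_nonpos {ν u : ℝ} (hu : u ≤ 0) : u ^ 2 + phibar ν u = -ν := by
  simp only [phibar, if_pos hu]
  ring

lemma sq_add_phibar_of_mem_Ioc {ν u : ℝ} (hu : u ∈ Ioc 0 √(2 * ν)) :
    u ^ 2 + phibar ν u = u ^ 2 - ν := by
  simp only [phibar, if_neg hu.1.not_ge, if_pos hu.2]
  ring

lemma sq_add_phibar_of_sqrt_lt {ν u : ℝ} (hu : √(2 * ν) < u) : u ^ 2 + phibar ν u = ν := by
  simp only [phibar, if_neg ((sqrt_nonneg _).trans_lt hu).not_ge, if_neg hu.not_ge]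
  ring

lemma integral_eq_setIntegral_Iic_add_Ioc_add_Ioi {E : Type*} [NormedAddCommGroup E]
    [NormedSpace ℝ E] {μ : Measure ℝ} {f : ℝ → E} {b c : ℝ} (hbc : b ≤ c)
    (h_left : IntegrableOn f (Iic b) μ) (h_mid : IntegrableOn f (Ioc b c) μ)
    (h_right : IntegrableOn f (Ioi c) μ) :
    ∫ x, f x ∂μ = ∫ x in Iic b, f x ∂μ + ∫ x in Ioc b c, f x ∂μ + ∫ x in Ioi c, f x ∂μ := by
  have h_Iic : IntegrableOn f (Iic c) μ := Iic_union_Ioc_eq_Iic hbc ▸ h_left.union h_mid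
  rw [← intervalIntegral.integral_Iic_add_Ioi h_Iic h_right, ← Iic_union_Ioc_eq_Iic hbc,
    setIntegral_union (Iic_disjoint_Ioc le_rfl) measurableSet_Ioc h_left h_mid]

lemma measureReal_Ioc_eq_sub {μ : Measure ℝ} [IsFiniteMeasure μ] {b c : ℝ} (hbc : b ≤ c) :
    μ.real (Ioc b c) = μ.real (Iic c) - μ.real (Iic b) := by
  rw [← Iic_sdiff_Iic, measureReal_sdiff (Iic_subset_Iic.2 hbc) measurableSet_Iic]

namespace ProbabilityTheory

lemma setIntegral_gaussianReal_eq_setIntegral_smul {E : Type*} [NormedAddCommGroup E]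
    [NormedSpace ℝ E] {μ : ℝ} {v : ℝ≥0} (hv : v ≠ 0) (f : ℝ → E) (s : Set ℝ) :
    ∫ x in s, f x ∂gaussianReal μ v = ∫ x in s, gaussianPDFReal μ v x • f x := by
  rw [gaussianReal_of_var_ne_zero _ hv, setIntegral_withDensity_eq_setIntegral_toReal_smul' s
    (measurable_gaussianPDF μ v) (ae_of_all _ fun _ ↦ gaussianPDF_lt_top)]
  simp [toReal_gaussianPDF]

lemma gaussianPDFReal_mul_exp_neg_mul_sq {v : ℝ≥0} {C : ℝ} (hC : 0 ≤ 1 + 2 * C * v) (x : ℝ) :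
    gaussianPDFReal 0 v x * exp (-(C * x ^ 2)) = gaussianPDFReal 0 v (√(1 + 2 * C * v) * x) := by
  by_cases hv : v = 0
  · simp [hv]
  have hv' : (v : ℝ) ≠ 0 := by exact_mod_cast hv
  simp only [gaussianPDFReal, sub_zero]
  rw [mul_pow, sq_sqrt hC, mul_assoc, ← exp_add]
  congr 2
  field_simp
  ring

lemma setIntegral_Ioc_exp_neg_mul_sq_gaussianReal {v : ℝ≥0} (hv : v ≠ 0) {C : ℝ}
    (hC : 0 < 1 + 2 * C * v) {b a : ℝ} (hba : b ≤ a) :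
    ∫ x in Ioc b a, exp (-(C * x ^ 2)) ∂gaussianReal 0 v
      = (√(1 + 2 * C * v))⁻¹
        * (gaussianReal 0 v).real (Ioc (√(1 + 2 * C * v) * b) (√(1 + 2 * C * v) * a)) := by
  set k := √(1 + 2 * C * v)
  have hk : 0 < k := sqrt_pos.2 hC
  rw [setIntegral_gaussianReal_eq_setIntegral_smul hv]
  simp only [smul_eq_mul, gaussianPDFReal_mul_exp_neg_mul_sq hC.le]
  rw [← intervalIntegral.integral_of_le hba, intervalIntegral.integral_comp_mul_left _ hk.ne',
    intervalIntegral.integral_of_le (by gcongr), smul_eq_mul]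
  congr 1
  simpa using (setIntegral_gaussianReal_eq_setIntegral_smul hv (fun _ ↦ (1 : ℝ)) _).symm

lemma gaussianReal_real_Iic_zero {v : ℝ≥0} (hv : v ≠ 0) :
    (gaussianReal 0 v).real (Iic 0) = 1 / 2 := by
  have := nullSingletonClass_gaussianReal (μ := 0) hv
  have hsymm : (gaussianReal 0 v).real (Ioi 0) = (gaussianReal 0 v).real (Iic 0) := by
    conv_rhs => rw [← neg_zero, ← gaussianReal_map_neg (μ := 0)]
    rw [map_measureReal_apply measurable_neg measurableSet_Iic, measureReal_congr Ioi_ae_eq_Ici]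
    simp
  have hcompl := probReal_compl_eq_one_sub (μ := gaussianReal 0 v) (measurableSet_Iic (a := 0))
  rw [compl_Iic, hsymm] at hcompl
  linarith

end ProbabilityTheory

theorem partial_second_level_integral_general (C ν : ℝ) (hC : 0 ≤ C)
    (a : ℝ) (ha : a = Real.sqrt (2 * ν))
    (Φ : ℝ → ℝ) (hΦ : ∀ x, Φ x = ((gaussianReal 0 1) (Set.Iic x)).toReal) :
    ∫ g, Real.exp (-(C * (g ^ 2 + phibar ν g))) ∂(gaussianReal 0 1)
      = (1 / 2) * Real.exp (C * ν) + Real.exp (-(C * ν)) * (1 - Φ a)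
        + Real.exp (C * ν) * (Real.sqrt (1 + 2 * C))⁻¹
          * (Φ (a * Real.sqrt (1 + 2 * C)) - 1 / 2) := by
  subst ha
  set f := fun g ↦ exp (-(C * (g ^ 2 + phibar ν g)))
  have h_left : EqOn f (fun _ ↦ exp (C * ν)) (Iic 0) := fun g hg ↦ by
    simp [f, sq_add_phibar_of_nonpos (mem_Iic.1 hg)]
  have h_mid : EqOn f (fun g ↦ exp (C * ν) * exp (-(C * g ^ 2))) (Ioc 0 √(2 * ν)) := fun g hg ↦ by
    simp only [f, ← exp_add, sq_add_phibar_of_mem_Ioc hg]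
    congr 1
    ring
  have h_right : EqOn f (fun _ ↦ exp (-(C * ν))) (Ioi √(2 * ν)) := fun g hg ↦ by
    simp [f, sq_add_phibar_of_sqrt_lt (mem_Ioi.1 hg)]
  rw [integral_eq_setIntegral_Iic_add_Ioc_add_Ioi (sqrt_nonneg _)
      ((integrableOn_const ..).congr_fun h_left.symm measurableSet_Iic)
      ((by fun_prop : Continuous _).integrableOn_Ioc.congr_fun h_mid.symm measurableSet_Ioc)
      ((integrableOn_const ..).congr_fun h_right.symm measurableSet_Ioi),
    setIntegral_congr_fun measurableSet_Iic h_left, setIntegral_congr_fun measurableSet_Ioc h_mid,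
    setIntegral_congr_fun measurableSet_Ioi h_right, setIntegral_const, setIntegral_const,
    integral_const_mul, setIntegral_Ioc_exp_neg_mul_sq_gaussianReal one_ne_zero
      (by rw [NNReal.coe_one, mul_one]; linarith)
      (sqrt_nonneg _), mul_zero, measureReal_Ioc_eq_sub (by positivity),
    gaussianReal_real_Iic_zero one_ne_zero,
    ← compl_Iic, probReal_compl_eq_one_sub measurableSet_Iic]
  simp only [hΦ, ← measureReal_def, mul_comm √(2 * ν), smul_eq_mul, NNReal.coe_one, mul_one]
  ring

/-- Partial second level integral: with `a = √(2ν)` and `Φ` the standard Gaussian CDF,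
`∫ e^{−C(g² + φ̄_ν(g))} dγ₁(g)
  = (1/2)e^{Cν} + e^{−Cν}(1 − Φ(a)) + e^{Cν}(1+2C)^{−1/2}(Φ(a√(1+2C)) − 1/2)`. -/
theorem partial_second_level_integral (C ν : ℝ) (hC : 0 ≤ C) (hν : 0 ≤ ν)
    (a : ℝ) (ha : a = Real.sqrt (2 * ν))
    (Φ : ℝ → ℝ) (hΦ : ∀ x, Φ x = ((gaussianReal 0 1) (Set.Iic x)).toReal) :
    ∫ g, Real.exp (-(C * (g ^ 2 + phibar ν g))) ∂(gaussianReal 0 1)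
      = (1 / 2) * Real.exp (C * ν) + Real.exp (-(C * ν)) * (1 - Φ a)
        + Real.exp (C * ν) * (Real.sqrt (1 + 2 * C))⁻¹
          * (Φ (a * Real.sqrt (1 + 2 * C)) - 1 / 2) :=
  partial_second_level_integral_general C ν hC a ha Φ hΦ
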